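/- The singular locus of the sextic surface F defined by Q = 0 consists of exactly 56 points of ℙ³(ℂ): the set of points of the projectivization of ℂ⁴ represented by vectors p ∈ ℂ⁴ \ {0} with Q(p) = 0 and all four partial derivatives of Q vanishing at p has cardinality 56. -/

import Mathlib

/-!
By Euler's identity `6Q = ∑ xᵢ ∂Q/∂xᵢ`, the singular points are the common zeros of the gradient.
None lies on the plane `x₃ = 0`: there the three remaining partials force `x₀¹¹ = 0` (an explicit
ideal membership), and likewise for `x₁, x₂` by cyclic symmetry. In the chart `x₃ = 1` the
gradient gives four equations in `(x, y, z)`, homogeneous for the `ℤ/14`-grading with weights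
`(1, 11, 9)`. Modulo them, `x¹⁴, x²⁸, x⁴², x⁵⁶` reduce into the span of the weight-0 monomials
`1, xz³, y³z, yz⁵`, so a linear relation among `1, x¹⁴, …, x⁵⁶` holds: the eliminant, which is
separable of degree 56. Reducing in weights 11 and 9 in the same way expresses `y` and `z` as
polynomials in `x`; the cofactors in the `linear_combination`s are these reductions. Conversely, at
`(t, paramY t, paramZ t)` each chart equation is a multiple of the eliminant at `t`, so its 56 roots
give 56 distinct singular points.
-/

open MvPolynomial

/-- The 56-nodal sextic `Q = x₀⁵x₂ + x₀x₁⁵ + x₁x₂⁵ − 5x₀²x₁²x₂²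
    + (x₀³x₁ + x₀x₂³ + x₁³x₂)x₃² − x₃⁶`. -/
noncomputable def Q : MvPolynomial (Fin 4) ℂ :=
  X 0 ^ 5 * X 2 + X 0 * X 1 ^ 5 + X 1 * X 2 ^ 5 - 5 * X 0 ^ 2 * X 1 ^ 2 * X 2 ^ 2
    + (X 0 ^ 3 * X 1 + X 0 * X 2 ^ 3 + X 1 ^ 3 * X 2) * X 3 ^ 2 - X 3 ^ 6

open scoped Polynomial

lemma Polynomial.separable_of_mul_add_mul_derivative_eq_C {K : Type*} [Field K] {p a b : K[X]}
    {c : K} (hc : c ≠ 0) (h : a * p + b * Polynomial.derivative p = Polynomial.C c) :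
    p.Separable :=
  ⟨Polynomial.C c⁻¹ * a, Polynomial.C c⁻¹ * b, by
    rw [mul_assoc, mul_assoc, ← mul_add, h, ← Polynomial.C_mul, inv_mul_cancel₀ hc, Polynomial.C_1]⟩

def gradQ (v : Fin 4 → ℂ) : Fin 4 → ℂ :=
  ![5 * v 0 ^ 4 * v 2 + v 1 ^ 5 - 10 * v 0 * v 1 ^ 2 * v 2 ^ 2 + (3 * v 0 ^ 2 * v 1 + v 2 ^ 3) * v 3 ^ 2,
    5 * v 0 * v 1 ^ 4 + v 2 ^ 5 - 10 * v 0 ^ 2 * v 1 * v 2 ^ 2 + (v 0 ^ 3 + 3 * v 1 ^ 2 * v 2) * v 3 ^ 2,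
    v 0 ^ 5 + 5 * v 1 * v 2 ^ 4 - 10 * v 0 ^ 2 * v 1 ^ 2 * v 2 + (3 * v 0 * v 2 ^ 2 + v 1 ^ 3) * v 3 ^ 2,
    2 * (v 0 ^ 3 * v 1 + v 0 * v 2 ^ 3 + v 1 ^ 3 * v 2) * v 3 - 6 * v 3 ^ 5]

lemma eval_pderiv_Q (v : Fin 4 → ℂ) (i : Fin 4) : eval v (pderiv i Q) = gradQ v i := by
  have h5 : ∀ j, pderiv j (5 : MvPolynomial (Fin 4) ℂ) = 0 := fun j => by
    simpa using (pderiv j).map_natCast 5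
  fin_cases i <;> simp [Q, gradQ, h5] <;> ring

lemma six_mul_eval_Q (v : Fin 4 → ℂ) : 6 * eval v Q = ∑ i, v i * gradQ v i := by
  simp only [Q, map_sub, map_add, map_mul, map_pow, eval_X, eval_ofNat, gradQ, Fin.sum_univ_four,
    Matrix.cons_val_zero, Matrix.cons_val_one, Matrix.cons_val]
  ring

lemma eval_Q_eq_zero_and_forall_eval_pderiv_iff (v : Fin 4 → ℂ) :
    (eval v Q = 0 ∧ ∀ i, eval v (pderiv i Q) = 0) ↔ gradQ v = 0 := by
  simp only [eval_pderiv_Q, funext_iff, Pi.zero_apply]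
  refine ⟨And.right, fun h => ⟨?_, h⟩⟩
  simpa [h] using six_mul_eval_Q v

lemma gradQ_smul (c : ℂ) (v : Fin 4 → ℂ) : gradQ (c • v) = c ^ 5 • gradQ v := by
  ext i
  fin_cases i <;>
    simp only [gradQ, Pi.smul_apply, smul_eq_mul, Fin.zero_eta, Fin.mk_one, Fin.reduceFinMk,
      Matrix.cons_val_zero, Matrix.cons_val_one, Matrix.cons_val] <;>
    ring

lemma gradQ_affine_eq_zero_iff (x y z : ℂ) :
    gradQ ![x, y, z, 1] = 0 ↔
      5 * x ^ 4 * z + y ^ 5 - 10 * x * y ^ 2 * z ^ 2 + 3 * x ^ 2 * y + z ^ 3 = 0 ∧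
      5 * x * y ^ 4 + z ^ 5 - 10 * x ^ 2 * y * z ^ 2 + x ^ 3 + 3 * y ^ 2 * z = 0 ∧
      x ^ 5 + 5 * y * z ^ 4 - 10 * x ^ 2 * y ^ 2 * z + 3 * x * z ^ 2 + y ^ 3 = 0 ∧
      x ^ 3 * y + x * z ^ 3 + y ^ 3 * z = 3 := by
  have : gradQ ![x, y, z, 1] =
      ![5 * x ^ 4 * z + y ^ 5 - 10 * x * y ^ 2 * z ^ 2 + 3 * x ^ 2 * y + z ^ 3,
        5 * x * y ^ 4 + z ^ 5 - 10 * x ^ 2 * y * z ^ 2 + x ^ 3 + 3 * y ^ 2 * z,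
        x ^ 5 + 5 * y * z ^ 4 - 10 * x ^ 2 * y ^ 2 * z + 3 * x * z ^ 2 + y ^ 3,
        2 * (x ^ 3 * y + x * z ^ 3 + y ^ 3 * z - 3)] := by
    ext i
    fin_cases i <;>
      simp only [gradQ, Fin.zero_eta, Fin.mk_one, Fin.reduceFinMk, Matrix.cons_val_zero,
        Matrix.cons_val_one, Matrix.cons_val, one_pow, mul_one] <;>
      ring
  rw [this]
  simp only [Matrix.cons_eq_zero_iff, Matrix.zero_empty, and_true, mul_eq_zero, two_ne_zero,
    false_or, sub_eq_zero]

lemma eq_zero_of_plane_partials {a b c : ℂ}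
    (h0 : 5 * a ^ 4 * c + b ^ 5 - 10 * a * b ^ 2 * c ^ 2 = 0)
    (h1 : 5 * a * b ^ 4 + c ^ 5 - 10 * a ^ 2 * b * c ^ 2 = 0)
    (h2 : a ^ 5 + 5 * b * c ^ 4 - 10 * a ^ 2 * b ^ 2 * c = 0) : a = 0 :=
  eq_zero_of_pow_eq_zero <| show a ^ 11 = 0 by
    linear_combination
      (9875/4116 * a ^ 4 * b ^ 2 - 1375/1372 * a ^ 2 * b * c ^ 3 - 625/4116 * a * b ^ 4 * c) * h0
      + (-1975/4116 * a ^ 3 * b ^ 3 - 75/1372 * a * b ^ 2 * c ^ 3 + 125/4116 * b ^ 5 * c) * h1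
      + (a ^ 6 - 8215/4116 * a ^ 3 * b ^ 2 * c + 15/1372 * a * b * c ^ 4 - 25/4116 * b ^ 4 * c ^ 2) * h2

lemma eq_zero_of_gradQ_eq_zero_of_last_eq_zero {v : Fin 4 → ℂ} (h : gradQ v = 0) (h3 : v 3 = 0) :
    v = 0 := by
  have h0 := congrFun h 0
  have h1 := congrFun h 1
  have h2 := congrFun h 2
  simp only [gradQ, h3, Matrix.cons_val_zero, Matrix.cons_val_one, Matrix.cons_val,
    Pi.zero_apply] at h0 h1 h2
  have ha := eq_zero_of_plane_partials (a := v 0) (b := v 1) (c := v 2)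
    (by linear_combination h0) (by linear_combination h1) (by linear_combination h2)
  have hb := eq_zero_of_plane_partials (a := v 1) (b := v 2) (c := v 0)
    (by linear_combination h1) (by linear_combination h2) (by linear_combination h0)
  have hc := eq_zero_of_plane_partials (a := v 2) (b := v 0) (c := v 1)
    (by linear_combination h2) (by linear_combination h0) (by linear_combination h1)
  ext i
  fin_cases i
  exacts [ha, hb, hc, h3]

noncomputable def eliminant : ℂ[X] :=
  823543 * Polynomial.X ^ 56 + 131296284 * Polynomial.X ^ 42 - 88428830 * Polynomial.X ^ 28
    - 43690996 * Polynomial.X ^ 14 - 1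

lemma eval_eliminant (t : ℂ) :
    eliminant.eval t =
      823543 * t ^ 56 + 131296284 * t ^ 42 - 88428830 * t ^ 28 - 43690996 * t ^ 14 - 1 := by
  simp [eliminant]

noncomputable def paramY (t : ℂ) : ℂ :=
  (13172552129994565 * t ^ 53 + 2100081171641123825 * t ^ 39 - 1414416628604138929 * t ^ 25
    - 698836612381093125 * t ^ 11) / 482785886336

noncomputable def paramZ (t : ℂ) : ℂ :=
  (-343101528964173 * t ^ 51 - 54700188801399813 * t ^ 37 + 36840555850385553 * t ^ 23
    + 18202975872921601 * t ^ 9) / 241392943168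

section Affine

variable {x y z : ℂ}

lemma isRoot_eliminant_of_gradQ (h : gradQ ![x, y, z, 1] = 0) : eliminant.IsRoot x := by
  obtain ⟨h0, h1, h2, h3⟩ := (gradQ_affine_eq_zero_iff x y z).mp h
  rw [Polynomial.IsRoot, eval_eliminant]
  linear_combination
    (-227597452775/6 * x ^ 45 * z ^ 6 - 113700615525 * x ^ 42 * y ^ 2 * z ^ 7 - 16470860 * x ^ 48 * z - 2509239569837/6 * x ^ 45 * y ^ 2 * z ^ 2 + 534340127391/2 * x ^ 43 * y * z ^ 5 + 2053014193503 * x ^ 42 * y ^ 4 * z ^ 3 + 823543 * x ^ 46 * y - 1141532935823/3 * x ^ 44 * z ^ 3 - 9808786084797/2 * x ^ 42 * y * z ^ 2 + 8896721907535/6 * x ^ 43 + 2355332980 * x ^ 36 * z ^ 7 - 19197261623540/3 * x ^ 31 * y * z ^ 11 + 9218184450475/6 * x ^ 29 * z ^ 14 + 31413700838520 * x ^ 28 * y ^ 3 * z ^ 12 + 562664746 * x ^ 39 * z ^ 2 - 235533298 * x ^ 34 * y * z ^ 6 - 41670440710591 * x ^ 32 * z ^ 9 + 588310598772638/3 * x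 ^ 29 * y ^ 2 * z ^ 10 - 281332373/5 * x ^ 37 * y * z - 98694838522 * x ^ 35 * z ^ 4 - 15251483035049366/25 * x ^ 30 * y * z ^ 8 - 30760445728610381/25 * x ^ 28 * z ^ 11 + 12052450963 * x ^ 33 * y * z ^ 3 + 27079851150366287/75 * x ^ 31 * z ^ 6 + 214384711361047759/50 * x ^ 28 * y ^ 2 * z ^ 7 + 695187941/5 * x ^ 34 * z + 1206264665897254733/75 * x ^ 31 * y ^ 2 * z ^ 2 - 120612957053541568/15 * x ^ 29 * y * z ^ 5 - 1973887635104598654/25 * x ^ 28 * y ^ 4 * z ^ 3 - 76959253/5 * x ^ 32 * y + 365534543476357948/25 * x ^ 30 * z ^ 3 + 9430797030757943827/50 * x ^ 28 * y * z ^ 2 - 2851171065205692803/50 * x ^ 29 + 6153378840 * x ^ 22 * z ^ 7 - 16717809394440 * x ^ 17 * y * z ^ 11 + 4013797739175 * x ^ 15 * z ^ 14 + 82069246118160 * x ^ 14 * y ^ 3 * z ^ 12 - 106427412 * x ^ 25 * z ^ 2 - 615337884 * x ^ 20 * y * z ^ 6 + 6765726297022 * x ^ 18 * z ^ 9 + 73174575080068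 * x ^ 15 * y ^ 2 * z ^ 10 + 53213706/5 * x ^ 23 * y * z + 18606881524 * x ^ 21 * z ^ 4 + 13542261974865316/75 * x ^ 16 * y * z ^ 8 + 10063227821208002/25 * x ^ 14 * z ^ 11 - 2276650838 * x ^ 19 * y * z ^ 3 - 20882895747449183/150 * x ^ 17 * z ^ 6 - 38081215694759664/25 * x ^ 14 * y ^ 2 * z ^ 7 - 95050102/5 * x ^ 20 * z - 880446907407947077/150 * x ^ 17 * y ^ 2 * z ^ 2 + 29479749134702447/10 * x ^ 15 * y * z ^ 5 + 720365651515593063/25 * x ^ 14 * y ^ 4 * z ^ 3 + 12734561/5 * x ^ 18 * y - 400203014656643443/75 * x ^ 16 * z ^ 3 - 3441747106378651719/50 * x ^ 14 * y * z ^ 2 + 1040528169082625391/50 * x ^ 15 + 764592500 * x ^ 8 * z ^ 7 - 43622951267500/21 * x ^ 3 * y * z ^ 11 + 2992423896875/6 * x * z ^ 14 + 71383011165000/7 * y ^ 3 * z ^ 12 - 147127190 * x ^ 11 * z ^ 2 - 76459250 * x ^ 6 * y * z ^ 6 + 11060421570625 * x ^ 4 * z ^ 9 - 624139155250150/21 *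 x * y ^ 2 * z ^ 10 + 14712719 * x ^ 9 * y * z + 25375461510 * x ^ 7 * z ^ 4 + 1207960861416310/7 * x ^ 2 * y * z ^ 8 + 2515100449383957/7 * z ^ 11 - 3129932029 * x ^ 5 * y * z ^ 3 - 5379751996957224/49 * x ^ 3 * z ^ 6 - 124770943457292589/98 * y ^ 2 * z ^ 7 - 19655383 * x ^ 6 * z - 3537099992452104056/735 * x ^ 3 * y ^ 2 * z ^ 2 + 36136727707705361/15 * x * y * z ^ 5 + 5787981805830715728/245 * y ^ 4 * z ^ 3 + 3189677 * x ^ 4 * y - 1071847745411786166/245 * x ^ 2 * z ^ 3 - 27653692343533925819/490 * y * z ^ 2 + 25081254634408973873/1470 * x) * h0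
    + (16470860 * x ^ 49 * z ^ 2 - 795812710525/3 * x ^ 44 * y * z ^ 6 + 759306646 * x ^ 45 * z ^ 4 + 2965464946171/6 * x ^ 44 * y ^ 3 * z ^ 2 + 2204779823645 * x ^ 42 * y ^ 2 * z ^ 5 - 4562313562646/3 * x ^ 43 * y * z ^ 3 - 2965548114410 * x ^ 44 * z - 44447312/15 * x ^ 42 * y - 188897704996 * x ^ 33 * z ^ 10 + 22687672827820/3 * x ^ 30 * y ^ 2 * z ^ 11 + 224787680111995/6 * x ^ 28 * y * z ^ 14 - 1093007983914/25 * x ^ 36 * z ^ 5 + 855980689616409/5 * x ^ 29 * z ^ 12 - 588310598772638/15 * x ^ 28 * y ^ 3 * z ^ 10 + 235754927572794/25 * x ^ 32 * z ^ 7 + 137600902428926363/50 * x ^ 29 * y ^ 2 * z ^ 8 + 1555471043/5 * x ^ 35 * z ^ 2 + 87788674790138098/15 * x ^ 30 * y * z ^ 6 + 19491415679573271/25 * x ^ 28 * z ^ 9 - 3484115285273/25 * x ^ 31 * z ^ 4 - 1425585514242210139/75 * x ^ 30 * y ^ 3 * z ^ 2 - 6360348932160676166/75 * x ^ 28 * y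 ^ 2 * z ^ 5 + 1462138625039801226/25 * x ^ 29 * y * z ^ 3 + 2851171069064028998/25 * x ^ 30 * z - 7728672 * x ^ 28 * y - 493500982968 * x ^ 19 * z ^ 10 + 19757411102520 * x ^ 16 * y ^ 2 * z ^ 11 + 97877438564535 * x ^ 14 * y * z ^ 14 + 207939742388/25 * x ^ 22 * z ^ 5 - 134467048089178/5 * x ^ 15 * z ^ 12 - 73174575080068/5 * x ^ 14 * y ^ 3 * z ^ 10 - 44330624029748/25 * x ^ 18 * z ^ 7 - 80442969814835369/75 * x ^ 15 * y ^ 2 * z ^ 8 - 330659546/5 * x ^ 21 * z ^ 2 - 32427292967475161/15 * x ^ 16 * y * z ^ 6 - 3942772194904382/25 * x ^ 14 * z ^ 9 + 649317039056/25 * x ^ 17 * z ^ 4 + 1040528163300301091/150 * x ^ 16 * y ^ 3 * z ^ 2 + 773728858505525349/25 * x ^ 14 * y ^ 2 * z ^ 5 - 1600812352860626866/75 * x ^ 15 * y * z ^ 3 - 1040528170106674806/25 * x ^ 16 * z + 13767536/5 * x ^ 14 * y - 61320318500 * x ^ 5 * z ^ 10 + 51554396952500/21 * x ^ 2 * y ^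 2 * z ^ 11 + 72970987866875/6 * y * z ^ 14 + 11860901094 * x ^ 8 * z ^ 5 - 316736130673765/7 * x * z ^ 12 + 124827831050030/21 * y ^ 3 * z ^ 10 - 2444336503798 * x ^ 4 * z ^ 7 - 1678842606265693/2 * x * y ^ 2 * z ^ 8 - 98046369 * x ^ 7 * z ^ 2 - 12301258786423784/7 * x ^ 2 * y * z ^ 6 - 203160923783041 * z ^ 9 + 176523732039/5 * x ^ 3 * z ^ 4 + 4180209081988850248/735 * x ^ 2 * y ^ 3 * z ^ 2 + 3730055320268449048/147 * y ^ 2 * z ^ 5 - 4287392961598706042/245 * x * y * z ^ 3 - 8360418219254206046/245 * x ^ 2 * z + 6151520/3 * y) * h1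
    + (823543 * x ^ 51 + 8235430 * x ^ 48 * y ^ 2 * z + 160590885 * x ^ 46 * y * z ^ 4 + 1137888438715/6 * x ^ 44 * z ^ 7 - 227094923475/2 * x ^ 43 * y ^ 3 * z ^ 5 + 63412811 * x ^ 47 * z ^ 2 - 823543 * x ^ 46 * y ^ 3 + 12548569653025/6 * x ^ 44 * y ^ 2 * z ^ 3 - 418215841624 * x ^ 42 * y * z ^ 6 + 45294865 * x ^ 45 * y * z + 5704865456458/3 * x ^ 43 * z ^ 4 + 228146571079 * x ^ 42 * y ^ 3 * z ^ 2 - 2965544337637/2 * x ^ 43 * y ^ 2 - 26690320851215/6 * x ^ 42 * z + 117766649/5 * x ^ 37 * y * z ^ 5 - 11776664900 * x ^ 35 * z ^ 8 + 235533298 * x ^ 34 * y ^ 3 * z ^ 6 - 94331085849 * x ^ 32 * y ^ 2 * z ^ 9 + 90496026941320/3 * x ^ 30 * y * z ^ 12 - 44957536022399/6 * x ^ 28 * z ^ 15 - 13728159284/5 * x ^ 38 * z ^ 3 + 281332373/5 * x ^ 37 * y ^ 3 * z - 21829671108 * x ^ 35 * y ^ 2 * z ^ 4 - 429434026721 * x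 ^ 33 * y * z ^ 7 + 5215444905975689/25 * x ^ 31 * z ^ 10 - 4176477179644 * x ^ 30 * y ^ 3 * z ^ 8 + 159479467043659/15 * x ^ 28 * y ^ 2 * z ^ 11 - 1406661865 * x ^ 36 * y * z ^ 2 + 13621718569774/25 * x ^ 34 * z ^ 5 - 12052450963 * x ^ 33 * y ^ 3 * z ^ 3 + 116653223082557/25 * x ^ 31 * y ^ 2 * z ^ 6 - 52977644215478024/25 * x ^ 29 * y * z ^ 9 + 59753883837777353/50 * x ^ 28 * y ^ 4 * z ^ 7 - 76959253/5 * x ^ 37 + 74404589/5 * x ^ 34 * y ^ 2 * z + 1216432070798/5 * x ^ 32 * y * z ^ 4 - 136221737220854278/75 * x ^ 30 * z ^ 7 + 54881579787547996/25 * x ^ 29 * y ^ 3 * z ^ 5 - 4800532989/5 * x ^ 33 * z ^ 2 + 76959253/5 * x ^ 32 * y ^ 3 - 1206265346086780196/15 * x ^ 30 * y ^ 2 * z ^ 3 + 191944331443342436/15 * x ^ 28 * y * z ^ 6 - 1700767558/5 * x ^ 31 * y * z - 1827669164734449337/25 * x ^ 29 * z ^ 4 - 219321141352714373/25 * x ^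 28 * y ^ 3 * z ^ 2 + 2851171067137860803/50 * x ^ 29 * y ^ 2 + 8553513187900406019/50 * x ^ 28 * z + 307668942/5 * x ^ 23 * y * z ^ 5 - 30766894200 * x ^ 21 * z ^ 8 + 615337884 * x ^ 20 * y ^ 3 * z ^ 6 - 246442822542 * x ^ 18 * y ^ 2 * z ^ 9 + 78807871613520 * x ^ 16 * y * z ^ 12 - 19575487712907 * x ^ 14 * z ^ 15 + 2611950488/5 * x ^ 24 * z ^ 3 - 53213706/5 * x ^ 23 * y ^ 3 * z + 4159626856 * x ^ 21 * y ^ 2 * z ^ 4 + 64995898002 * x ^ 19 * y * z ^ 7 - 831432519701938/25 * x ^ 17 * z ^ 10 + 651928347448 * x ^ 16 * y ^ 3 * z ^ 8 - 423097234100226/5 * x ^ 14 * y ^ 2 * z ^ 11 + 266068530 * x ^ 22 * y * z ^ 2 - 2570318504908/25 * x ^ 20 * z ^ 5 + 2276650838 * x ^ 19 * y ^ 3 * z ^ 3 - 21974364134394/25 * x ^ 17 * y ^ 2 * z ^ 6 + 71283416358467824/75 * x ^ 15 * y * z ^ 9 - 11776475529492513/25 * x ^ 14 * y ^ 4 * z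 ^ 7 + 12734561/5 * x ^ 23 - 32295508/5 * x ^ 20 * y ^ 2 * z - 229601461831/5 * x ^ 18 * y * z ^ 4 + 104723947102070527/150 * x ^ 16 * z ^ 7 - 40705792003419039/50 * x ^ 15 * y ^ 3 * z ^ 5 + 767706373/5 * x ^ 19 * z ^ 2 - 12734561/5 * x ^ 18 * y ^ 3 + 880447159199089729/30 * x ^ 16 * y ^ 2 * z ^ 3 - 23447525709350736/5 * x ^ 14 * y * z ^ 6 + 221477501/5 * x ^ 17 * y * z + 2001013092211064792/75 * x ^ 15 * z ^ 4 + 80040682766053781/25 * x ^ 14 * y ^ 3 * z ^ 2 - 1040528169771002191/50 * x ^ 15 * y ^ 2 - 3121584505199777343/50 * x ^ 14 * z + 7645925 * x ^ 9 * y * z ^ 5 - 3822962500 * x ^ 7 * z ^ 8 + 76459250 * x ^ 6 * y ^ 3 * z ^ 6 - 30621929625 * x ^ 4 * y ^ 2 * z ^ 9 + 205638900515000/21 * x ^ 2 * y * z ^ 12 - 14594197573375/6 * z ^ 15 + 739513068 * x ^ 10 * z ^ 3 - 14712719 * x ^ 9 * y ^ 3 * z + 5923858780 * x ^ 7 * y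 ^ 2 * z ^ 4 + 112977026575 * x ^ 5 * y * z ^ 7 - 55241944140719 * x ^ 3 * z ^ 10 + 1102979964100 * x ^ 2 * y ^ 3 * z ^ 8 - 429413305708615/21 * y ^ 2 * z ^ 11 + 367817975 * x ^ 8 * y * z ^ 2 - 140809620658 * x ^ 6 * z ^ 5 + 3129932029 * x ^ 5 * y ^ 3 * z ^ 3 - 1209305583227 * x ^ 3 * y ^ 2 * z ^ 6 + 4718377523807880/7 * x * y * z ^ 9 - 5120738888815385/14 * y ^ 4 * z ^ 7 + 3189677 * x ^ 9 - 12241387 * x ^ 6 * y ^ 2 * z - 62591303104 * x ^ 4 * y * z ^ 4 + 27037992894367039/49 * x ^ 2 * z ^ 7 - 32336433499139911/49 * x * y ^ 3 * z ^ 5 + 186754253 * x ^ 5 * z ^ 2 - 3189677 * x ^ 4 * y ^ 3 + 3537101667024368141/147 * x ^ 2 * y ^ 2 * z ^ 3 - 2817577754063411212/735 * y * z ^ 6 + 43017764 * x ^ 3 * y * z + 5359229944947253799/245 * x * z ^ 4 + 643109856912421181/245 * y ^ 3 * z ^ 2 - 8360418216493399291/490 * x * y ^ 2 - 75243763856519633089/1470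 * z) * h2
    + (230224386875/2 * x ^ 45 * y ^ 2 * z ^ 5 - 1365938924175/2 * x ^ 43 * y * z ^ 8 + 113700615525 * x ^ 42 * y ^ 4 * z ^ 6 - 1595311851623/3 * x ^ 44 * z ^ 6 + 11405634408350 * x ^ 43 * y ^ 3 * z ^ 4 - 2053014193503 * x ^ 42 * y ^ 6 * z ^ 2 + 1597887894127/3 * x ^ 44 * y ^ 2 * z ^ 2 - 9048768831634 * x ^ 42 * y * z ^ 5 + 2965539396379/2 * x ^ 45 * y - 11862354645190/3 * x ^ 43 * z ^ 3 - 2965592218379/2 * x ^ 42 * y ^ 3 * z + 156691278388645 * x ^ 29 * y ^ 2 * z ^ 13 - 31413700838520 * x ^ 28 * y ^ 5 * z ^ 11 - 733440673/15 * x ^ 42 + 2078866460142395/3 * x ^ 30 * y * z ^ 11 - 2253806009807422/15 * x ^ 28 * z ^ 14 + 134681996567234774/25 * x ^ 31 * z ^ 9 - 59753883837777353/50 * x ^ 30 * y ^ 3 * z ^ 7 - 709827225279589459/150 * x ^ 28 * y ^ 2 * z ^ 10 - 10966092943225924/5 * x ^ 31 * y ^ 2 * z ^ 5 + 594073341884467466/25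 * x ^ 29 * y * z ^ 8 - 137069297599412556/25 * x ^ 28 * y ^ 4 * z ^ 6 + 1535259534924445519/75 * x ^ 30 * z ^ 6 - 438641696689910812 * x ^ 29 * y ^ 3 * z ^ 4 + 1973887635104598654/25 * x ^ 28 * y ^ 6 * z ^ 2 - 1535245257505604141/75 * x ^ 30 * y ^ 2 * z ^ 2 + 26099181486475114871/75 * x ^ 28 * y * z ^ 5 - 2851171064829083213/50 * x ^ 31 * y + 3801561416587406584/25 * x ^ 29 * z ^ 3 + 2851171062575076843/50 * x ^ 28 * y ^ 3 * z + 409360716737910 * x ^ 15 * y ^ 2 * z ^ 13 - 82069246118160 * x ^ 14 * y ^ 5 * z ^ 11 + 151626237/5 * x ^ 28 - 513878304483530 * x ^ 16 * y * z ^ 11 + 408030375086908/5 * x ^ 14 * z ^ 14 - 47274318839884108/25 * x ^ 17 * z ^ 9 + 11776475529492513/25 * x ^ 16 * y ^ 3 * z ^ 7 + 45877061164094713/25 * x ^ 14 * y ^ 2 * z ^ 10 + 8137298857195291/10 * x ^ 17 * y ^ 2 * z ^ 5 - 1303081497429734057/150 * x ^ 15 * y * z ^ 8 + 49857691224252177/25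 * x ^ 14 * y ^ 4 * z ^ 6 - 560286973704742193/75 * x ^ 16 * z ^ 6 + 160081255892354014 * x ^ 15 * y ^ 3 * z ^ 4 - 720365651515593063/25 * x ^ 14 * y ^ 6 * z ^ 2 + 560284255352877677/75 * x ^ 16 * y ^ 2 * z ^ 2 - 3174944938642927804/25 * x ^ 14 * y * z ^ 5 + 1040528169388965361/50 * x ^ 17 * y - 4162112672770753094/75 * x ^ 15 * z ^ 3 - 1040528168247014221/50 * x ^ 14 * y ^ 3 * z + 356057865711875/7 * x * y ^ 2 * z ^ 13 - 71383011165000/7 * y ^ 5 * z ^ 11 + 15626891 * x ^ 14 - 5654766427068875/21 * x ^ 2 * y * z ^ 11 + 1092973982902670/21 * z ^ 14 - 1594142554965530 * x ^ 3 * z ^ 9 + 5120738888815385/14 * x ^ 2 * y ^ 3 * z ^ 7 + 60545446060074083/42 * y ^ 2 * z ^ 10 + 32310672664468535/49 * x ^ 3 * y ^ 2 * z ^ 5 - 348572134076983669/49 * x * y * z ^ 8 + 80308057839500142/49 * y ^ 4 * z ^ 6 - 214371447809486983/35 * x ^ 2 * z ^ 6 + 6431090895367461920/49 * x * y ^ 3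 * z ^ 4 - 5787981805830715728/245 * y ^ 6 * z ^ 2 + 643108790574821651/105 * x ^ 2 * y ^ 2 * z ^ 2 - 10932854674052040431/105 * y * z ^ 5 + 8360418211804574101/490 * x ^ 3 * y - 11147224274174995828/245 * x * z ^ 3 - 8360418205275210911/490 * y ^ 3 * z + 1/3) * h3

lemma eq_paramY_of_gradQ (h : gradQ ![x, y, z, 1] = 0) : y = paramY x := by
  obtain ⟨h0, h1, h2, h3⟩ := (gradQ_affine_eq_zero_iff x y z).mp h
  rw [paramY]
  linear_combination
    (572194043107578518935/9414324783552 * x ^ 46 * y ^ 2 + 140054913891556119995/6276216522368 * x ^ 44 * y * z ^ 3 - 468158762542564242765/1569054130592 * x ^ 43 * y ^ 4 * z + 6256962261747418375/120696471584 * x ^ 42 * z ^ 6 + 75101558589799829395/1448357659008 * x ^ 45 * z - 208108465820851597925/965571772672 * x ^ 42 * y ^ 2 * z ^ 2 - 880299038925657575455/12552433044736 * x ^ 43 * y - 23287190372668963125/120696471584 * x ^ 37 * z ^ 5 - 29498360349951298207325/965571772672 * x ^ 30 * z ^ 12 + 4657438074533792625/241392943168 * x ^ 35 * y * z ^ 4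 + 15842886252407578933415/482785886336 * x ^ 33 * z ^ 7 - 4606806970175779142235/60348235792 * x ^ 28 * y * z ^ 11 + 19567261651158497969/120696471584 * x ^ 36 * z ^ 2 - 1627927614768225548839985/1448357659008 * x ^ 31 * y * z ^ 6 + 32903409097968932093417/67365472512 * x ^ 29 * z ^ 9 + 1327136250669688161581571/241392943168 * x ^ 28 * y ^ 3 * z ^ 7 - 7787989177885072387/482785886336 * x ^ 34 * y * z - 535686672035959832619/18568687936 * x ^ 32 * z ^ 4 + 19507715501690801454902525/2896715318016 * x ^ 29 * y ^ 2 * z ^ 5 + 866427403406336280242718677/62762165223680 * x ^ 32 * y ^ 2 + 94831754199915881568150423/62762165223680 * x ^ 30 * y * z ^ 3 - 2126685444724643596959400389/31381082611840 * x ^ 29 * y ^ 4 * z + 10463310806952769310366745/965571772672 * x ^ 28 * z ^ 6 + 438747983939520490613763/37137375872 * x ^ 31 * z - 108844618678522100990265573/2413929431680 * x ^ 28 * y ^ 2 * z ^ 2 - 3031114850574619041360549653/188286495671040 * x ^ 29 * y + 1250056501325314375/7543529474 * x ^ 23 * z ^ 5 + 25339694546602992411625/965571772672 * x ^ 16 *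 z ^ 12 - 250011300265062875/15087058948 * x ^ 21 * y * z ^ 4 - 18884405031660326094475/241392943168 * x ^ 19 * z ^ 7 + 21677825523618461195075/120696471584 * x ^ 14 * y * z ^ 11 - 8307013231473680185/37137375872 * x ^ 22 * z ^ 2 + 6312649888802553686304145/2896715318016 * x ^ 17 * y * z ^ 6 - 646715794615498734758555/724178829504 * x ^ 15 * z ^ 9 - 5144780902150331801705115/482785886336 * x ^ 14 * y ^ 3 * z ^ 7 + 3009250913874058315/120696471584 * x ^ 20 * y * z + 18173341647296779329925/482785886336 * x ^ 18 * z ^ 4 - 37597434193066608134133475/2896715318016 * x ^ 15 * y ^ 2 * z ^ 5 - 11619954179732616817280885/432842518784 * x ^ 18 * y ^ 2 - 27285986286285334603768355/9414324783552 * x ^ 16 * y * z ^ 3 + 28521705713889150369689445/216421259392 * x ^ 15 * y ^ 4 * z - 5099496335988211868873239/241392943168 * x ^ 14 * z ^ 6 - 937336525145289795203227/40798807296 * x ^ 17 * z + 84627230522418356062898443/965571772672 * x ^ 14 * y ^ 2 * z ^ 2 + 1178902834387093234452936463/37657299134208 * x ^ 15 * y - 14371601129586498875/120696471584 * x ^ 9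 * z ^ 5 - 120798716256993447695/6408662208 * x ^ 2 * z ^ 12 + 2874320225917299775/241392943168 * x ^ 7 * y * z ^ 4 + 12611019841793379699231/482785886336 * x ^ 5 * z ^ 7 - 51102753750338627901201/844875301088 * y * z ^ 11 - 90477254210592738643/2413929431680 * x ^ 8 * z ^ 2 - 41463065644436238107965/95197217024 * x ^ 3 * y * z ^ 6 + 26441376842760879455015659/101385036130560 * x * z ^ 9 + 1237005984964462419955347/582672621440 * y ^ 3 * z ^ 7 + 8420191042601860291/2413929431680 * x ^ 6 * y * z + 16715486395659524288277/2413929431680 * x ^ 4 * z ^ 4 + 25669759979314909379269865/10138503613056 * x * y ^ 2 * z ^ 5 + 62435388667360163165439622927/11532547859851200 * x ^ 4 * y ^ 2 + 24997721028412760975904743617/46130191439404800 * x ^ 2 * y * z ^ 3 - 51083499818749224408086964213/1922091309975200 * x * y ^ 4 * z + 28927556922465075682111613/6759002408704 * z ^ 6 + 22368434975484895137470531/4827858863360 * x ^ 3 * z - 5213865259987280207707324757/295706355380800 * y ^ 2 * z ^ 2 - 291237946119237351227971232729/46130191439404800 * x * y) * h0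
    + (-65862760649972825/120696471584 * x ^ 46 * z ^ 2 - 52017640282507138085/724178829504 * x ^ 45 * y ^ 3 - 462767693962668099775/965571772672 * x ^ 43 * y ^ 2 * z ^ 3 - 26843702639883355765/2896715318016 * x ^ 44 * y * z - 6256962261747418375/120696471584 * x ^ 42 * z ^ 4 + 26012718141373669475/120696471584 * x ^ 42 * y ^ 2 - 12419834865423447/120696471584 * x ^ 41 * z + 1867881064585359311565/120696471584 * x ^ 34 * z ^ 8 + 2118686533948339969075/74274751744 * x ^ 29 * y * z ^ 12 - 45539394506552639/37137375872 * x ^ 37 * z ^ 3 - 17643437871391371768575/74274751744 * x ^ 30 * z ^ 10 - 6357981811315082122867/482785886336 * x ^ 33 * z ^ 5 + 147459583407743129064619/111412127616 * x ^ 30 * y ^ 2 * z ^ 6 + 704027864407452109643965/111412127616 * x ^ 28 * y * z ^ 9 - 154683397869364749/482785886336 * x ^ 36 + 570680886450921792347725/965571772672 * x ^ 29 * z ^ 7 - 3901543100338160290980505/2896715318016 * x ^ 28 * y ^ 3 * z ^ 5 + 1077321587463132473/10681103680 * x ^ 32 * z ^ 2 - 78766127582394207294792607/4827858863360 * x ^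 31 * y ^ 3 - 56413178546493937392497889/482785886336 * x ^ 29 * y ^ 2 * z ^ 3 - 8149360867795455439254739/4827858863360 * x ^ 30 * y * z - 65385536179370662414775/241392943168 * x ^ 28 * z ^ 4 + 708895134789244302883883053/14483576590080 * x ^ 28 * y ^ 2 + 94799569218311265/482785886336 * x ^ 27 * z - 1604546500346734962325/120696471584 * x ^ 20 * z ^ 8 - 83309630910577350125/3399900608 * x ^ 15 * y * z ^ 12 - 12458868161889310315/241392943168 * x ^ 23 * z ^ 3 + 63158349510243763262025/120696471584 * x ^ 16 * z ^ 10 + 369091860261652175725/18568687936 * x ^ 19 * z ^ 5 - 571642322461147977967235/222824255232 * x ^ 16 * y ^ 2 * z ^ 6 - 35444610017275890966036425/2896715318016 * x ^ 14 * y * z ^ 9 + 10189577107162453/18568687936 * x ^ 22 - 542513302956171114677725/482785886336 * x ^ 15 * z ^ 7 + 7519486838613321626826695/2896715318016 * x ^ 14 * y ^ 3 * z ^ 5 - 104904188059266030281/482785886336 * x ^ 18 * z ^ 2 + 1056359470884783347025535/33295578368 * x ^ 17 * y ^ 3 + 7656445167565984036270727/33682736256 * x ^ 15 * y ^ 2 *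 z ^ 3 + 1188297548522400245076257/362089414752 * x ^ 16 * y * z + 191050475852500526729313/482785886336 * x ^ 14 * z ^ 4 - 275709820445171193187160219/2896715318016 * x ^ 14 * y ^ 2 + 9812072143378043/185686879360 * x ^ 13 * z + 72029678353435830951/7543529474 * x ^ 6 * z ^ 8 + 50981539547834759534495/2896715318016 * x * y * z ^ 12 + 13125551614331731421/2413929431680 * x ^ 9 * z ^ 3 - 1243903819582301122673395/6759002408704 * x ^ 2 * z ^ 10 + 6492005306448440886261/2413929431680 * x ^ 5 * z ^ 5 + 45815036480165274813161/89641941760 * x ^ 2 * y ^ 2 * z ^ 6 + 47726275508954525699076377/20277007226112 * y * z ^ 9 + 155087791655705447/2413929431680 * x ^ 8 + 2088872835129116014975579/6759002408704 * x * z ^ 7 - 5133951995862981875853973/10138503613056 * y ^ 3 * z ^ 5 - 12042833862531731153/928434396800 * x ^ 4 * z ^ 2 - 5675944424305469378676329357/887119066142400 * x ^ 3 * y ^ 3 - 459073992199265099766236237/9995707787520 * x * y ^ 2 * z ^ 3 - 391362658778192286185181201/591412710761600 * x ^ 2 * y * z + 28682717444146388524513/482785886336 * z ^ 4 + 2619666697826175314817703829/136479856329600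 * y ^ 2) * h1
    + (-13172552129994565/482785886336 * x ^ 48 - 16020626877844497755/55706063808 * x ^ 45 * y ^ 2 * z + 9555323230367573505/60348235792 * x ^ 43 * y * z ^ 4 - 49790902913407007275/965571772672 * x ^ 42 * y ^ 4 * z ^ 2 - 187299443426014760995/724178829504 * x ^ 44 * z ^ 2 - 108500314889777594245/965571772672 * x ^ 43 * y ^ 3 + 74687026439096735125/482785886336 * x ^ 42 * y * z - 931487614906758525/482785886336 * x ^ 38 * y * z ^ 3 + 3639011615569069971/3771764737 * x ^ 36 * z ^ 6 - 4657438074533792625/241392943168 * x ^ 35 * y ^ 3 * z ^ 4 + 3731104691096184830505/482785886336 * x ^ 33 * y ^ 2 * z ^ 7 + 9048284393681270960145/60348235792 * x ^ 31 * y * z ^ 10 + 351588204862264234865/2561198336 * x ^ 29 * z ^ 13 + 2654948811948832701225/18568687936 * x ^ 28 * y ^ 3 * z ^ 11 - 4139944955141149/37137375872 * x ^ 39 * z - 194577412891634003/241392943168 * x ^ 36 * y ^ 2 * z ^ 2 + 28751917713455279805/60348235792 * x ^ 34 * y * z ^ 5 - 5499349700446162109087/30174117896 * x ^ 32 * z ^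 8 + 244674886793797047049/60348235792 * x ^ 31 * y ^ 3 * z ^ 6 - 232661404845898577373055/965571772672 * x ^ 29 * y ^ 2 * z ^ 9 + 773416989346823745/482785886336 * x ^ 37 * y - 195295881520667135131/241392943168 * x ^ 35 * z ^ 3 + 7787989177885072387/482785886336 * x ^ 34 * y ^ 3 * z - 788023844224458575349/120696471584 * x ^ 32 * y ^ 2 * z ^ 4 + 976259179621476387658175/181044707376 * x ^ 30 * y * z ^ 7 - 2429617795998558597278231/1448357659008 * x ^ 28 * z ^ 10 - 99867139435605366209/241392943168 * x ^ 33 * y * z ^ 2 + 19272727525476774636749/120696471584 * x ^ 31 * z ^ 5 - 1707994884983278994949/482785886336 * x ^ 30 * y ^ 3 * z ^ 3 - 280230516315401050669501/55706063808 * x ^ 28 * y ^ 2 * z ^ 6 - 486349443442939769/120696471584 * x ^ 34 - 78766116647294233430490987/1206964715840 * x ^ 31 * y ^ 2 * z + 2892349182060199578923283/56137893760 * x ^ 29 * y * z ^ 4 - 18911595491107142420328039/1206964715840 * x ^ 28 * y ^ 4 * z ^ 2 - 142593309074056319541025733/2413929431680 * x ^ 30 * z ^ 2 - 940183610588298994245097/37137375872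 * x ^ 29 * y ^ 3 + 513335168552036892869439709/14483576590080 * x ^ 28 * y * z + 50002260053012575/30174117896 * x ^ 24 * y * z ^ 3 - 400112879993318911265/482785886336 * x ^ 22 * z ^ 6 + 250011300265062875/15087058948 * x ^ 21 * y ^ 3 * z ^ 4 - 123272800764970343025/18568687936 * x ^ 19 * y ^ 2 * z ^ 7 - 62181295613902803936675/482785886336 * x ^ 17 * y * z ^ 10 - 113862100730241082359525/965571772672 * x ^ 15 * z ^ 13 - 118594087765961875846625/965571772672 * x ^ 14 * y ^ 3 * z ^ 11 - 151180822976869455/60348235792 * x ^ 25 * z - 12378864545804490195/482785886336 * x ^ 22 * y ^ 2 * z ^ 2 - 111384819753326582925/120696471584 * x ^ 20 * y * z ^ 5 + 196407489078209116028475/482785886336 * x ^ 18 * z ^ 8 - 11911018280002872415/1403447344 * x ^ 17 * y ^ 3 * z ^ 6 + 503739783262846234591025/965571772672 * x ^ 15 * y ^ 2 * z ^ 9 - 50947885535812265/18568687936 * x ^ 23 * y + 568501936121012699575/482785886336 * x ^ 21 * z ^ 3 - 3009250913874058315/120696471584 * x ^ 20 * y ^ 3 * z + 4747621753672399534625/482785886336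 * x ^ 18 * y ^ 2 * z ^ 4 - 30316614909756559272933275/2896715318016 * x ^ 16 * y * z ^ 7 + 4026107615417733231045275/1448357659008 * x ^ 14 * z ^ 10 + 270411722869647955365/482785886336 * x ^ 19 * y * z ^ 2 - 7850836628357347669121/37137375872 * x ^ 17 * z ^ 5 + 2292096340096917886455/482785886336 * x ^ 16 * y ^ 3 * z ^ 3 + 397614763773864365402905/40798807296 * x ^ 14 * y ^ 2 * z ^ 6 + 1149487623817915151/482785886336 * x ^ 20 + 30634411950197845729630713/241392943168 * x ^ 17 * y ^ 2 * z - 290521941040001113916758505/2896715318016 * x ^ 15 * y * z ^ 4 + 29459656731613136467142165/965571772672 * x ^ 14 * y ^ 4 * z ^ 2 + 360514707649977252622811/3138369792 * x ^ 16 * z ^ 2 + 23768014255114074740187019/482785886336 * x ^ 15 * y ^ 3 - 6884569807101237830377975/99886735104 * x ^ 14 * y * z - 574864045183459955/482785886336 * x ^ 10 * y * z ^ 3 + 1437032556020785972941/2413929431680 * x ^ 8 * z ^ 6 - 2874320225917299775/241392943168 * x ^ 7 * y ^ 3 * z ^ 4 + 2302075387084029290657/482785886336 * x ^ 5 * y ^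 2 * z ^ 7 + 44661961590178145835699/482785886336 * x ^ 3 * y * z ^ 10 + 61336425563271458176379/724178829504 * x * z ^ 13 + 85180670054217594870805/965571772672 * y ^ 3 * z ^ 11 + 665801459816587941/2413929431680 * x ^ 11 * z + 6275343784574135733/2413929431680 * x ^ 8 * y ^ 2 * z ^ 2 + 1474361251726398651/4161947296 * x ^ 6 * y * z ^ 5 - 342361784315018918057839/2413929431680 * x ^ 4 * z ^ 8 + 233017112951209515467/75435294740 * x ^ 3 * y ^ 3 * z ^ 6 - 627280207610396522645507/3379501204352 * x * y ^ 2 * z ^ 9 - 155087791655705447/482785886336 * x ^ 9 * y + 437263315059182197971/2413929431680 * x ^ 7 * z ^ 3 - 8420191042601860291/2413929431680 * x ^ 6 * y ^ 3 * z + 3327305510303050634743/2413929431680 * x ^ 4 * y ^ 2 * z ^ 4 + 14358116363604533676382215/6759002408704 * x ^ 2 * y * z ^ 7 - 9166465060753117626718891/12673129516320 * z ^ 10 + 233208002210161550649/2413929431680 * x ^ 5 * y * z ^ 2 - 7022377312577282452951/185686879360 * x ^ 3 * z ^ 5 + 1002139595298128746151/1206964715840 * x ^ 2 * y ^ 3 *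 z ^ 3 - 192308485624770369746646073/101385036130560 * y ^ 2 * z ^ 6 + 1669547635124880089/1206964715840 * x ^ 6 - 1746444221560898008907914571/68239928164800 * x ^ 3 * y ^ 2 * z + 72203012293330698918910225627/3548476264569600 * x * y * z ^ 4 - 523470036663793402321125497/84487530108800 * y ^ 4 * z ^ 2 - 559210661446300060104558637/24139294316800 * x ^ 2 * z ^ 2 - 2348650185933614222726599051/236565084304640 * x * y ^ 3 + 1761513269597841587127361729/126731295163200 * y * z) * h2
    + (-52017640282507138085/3138108261184 * x ^ 47 * y * z - 15609474274043559525/60348235792 * x ^ 45 * z ^ 4 - 17870998202698250063685/12552433044736 * x ^ 44 * y ^ 3 * z ^ 2 + 468158762542564242765/1569054130592 * x ^ 43 * y ^ 6 + 198898816473055689375/965571772672 * x ^ 42 * y ^ 2 * z ^ 5 + 71128517166894704825/37657299134208 * x ^ 45 * y ^ 2 + 1646896640279119411105/12552433044736 * x ^ 43 * y * z ^ 3 + 16118710545891162825/60348235792 * x ^ 42 * y ^ 4 * z - 103498623878528725/1448357659008 * x ^ 44 * z + 257805663115607915/482785886336 * x ^ 42 * y + 636178558928351102427225/482785886336 * x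 ^ 30 * y ^ 2 * z ^ 11 - 13274744059744163506125/18568687936 * x ^ 28 * y * z ^ 14 - 1279788701362423873711475/965571772672 * x ^ 31 * y * z ^ 9 - 138783207021181718433515/965571772672 * x ^ 29 * z ^ 12 - 16087106674631708546985/241392943168 * x ^ 28 * y ^ 3 * z ^ 10 + 6911791694896257893929513/241392943168 * x ^ 29 * y ^ 2 * z ^ 8 - 1327136250669688161581571/241392943168 * x ^ 28 * y ^ 5 * z ^ 6 - 73066017324552823310795363/2896715318016 * x ^ 30 * y * z ^ 6 + 10201768662235286660707645/2896715318016 * x ^ 28 * z ^ 9 - 236298382747182621884377821/62762165223680 * x ^ 33 * y * z - 133305055161879619228356993/2413929431680 * x ^ 31 * z ^ 4 - 20047153098961681941852568041/62762165223680 * x ^ 30 * y ^ 3 * z ^ 2 + 2126685444724643596959400389/31381082611840 * x ^ 29 * y ^ 6 + 43512231149433490700913811/724178829504 * x ^ 28 * y ^ 2 * z ^ 5 + 1358800314805174470704167/6276216522368 * x ^ 31 * y ^ 2 + 943830916280374969382593211/31381082611840 * x ^ 29 * y * z ^ 3 + 146667809660736385830921651/2413929431680 * x ^ 28 * y ^ 4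 * z - 371549004865548125/482785886336 * x ^ 30 * z - 50947885535812265/55706063808 * x ^ 28 * y - 1092980896313201913700375/965571772672 * x ^ 16 * y ^ 2 * z ^ 11 + 592970438829809379233125/965571772672 * x ^ 14 * y * z ^ 14 + 2731228862752713118124175/965571772672 * x ^ 17 * y * z ^ 9 - 94510094218914925714625/482785886336 * x ^ 15 * z ^ 12 - 54828516422985813713975/965571772672 * x ^ 14 * y ^ 3 * z ^ 10 - 3359517617226437246814465/60348235792 * x ^ 15 * y ^ 2 * z ^ 8 + 5144780902150331801705115/482785886336 * x ^ 14 * y ^ 5 * z ^ 6 + 17868795832230045388885045/362089414752 * x ^ 16 * y * z ^ 6 - 88565860142689585938205/12817324416 * x ^ 14 * z ^ 9 + 3169078412654350041076605/432842518784 * x ^ 19 * y * z + 25912795426942494424603095/241392943168 * x ^ 17 * z ^ 4 + 487275990346869167621616835/784527065296 * x ^ 16 * y ^ 3 * z ^ 2 - 28521705713889150369689445/216421259392 * x ^ 15 * y ^ 6 - 338883947447416866974047877/2896715318016 * x ^ 14 * y ^ 2 * z ^ 5 - 659988425808727654480765/1569054130592 * x ^ 17 * y ^ 2 - 1101257614369161194305573763/18828649567104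 * x ^ 15 * y * z ^ 3 - 3565215226688484141563769/30174117896 * x ^ 14 * y ^ 4 * z + 39667919884025125/362089414752 * x ^ 16 * z - 155087791655705447/1448357659008 * x ^ 14 * y + 785037807878505028936605/965571772672 * x ^ 2 * y ^ 2 * z ^ 11 - 425903350271087974354025/965571772672 * y * z ^ 14 - 1717075380696061650821535/1689750602176 * x ^ 3 * y * z ^ 9 - 1038341150330771850288671/20277007226112 * x * z ^ 12 - 187442660376814140886027/6759002408704 * y ^ 3 * z ^ 10 + 3353016082999048694086133/291336310720 * x * y ^ 2 * z ^ 8 - 1237005984964462419955347/582672621440 * y ^ 5 * z ^ 6 - 347709902516646009374967669/33795012043520 * x ^ 2 * y * z ^ 6 + 29329114966683125121454795/20277007226112 * z ^ 9 - 5675944424305469378676329357/3844182619950400 * x ^ 5 * y * z - 20055841969093184425642277/928434396800 * x ^ 3 * z ^ 4 - 962682334189968349793164205319/7688365239900800 * x ^ 2 * y ^ 3 * z ^ 2 + 51083499818749224408086964213/1922091309975200 * x * y ^ 6 + 601879196873748680375163229/25346259032640 * y ^ 2 * z ^ 5 + 782233700501321732932692961/9226038287880960 * x ^ 3 * y ^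 2 + 544111514760530095061542657913/46130191439404800 * x * y * z ^ 3 + 14092020776621114231662527993/591412710761600 * y ^ 4 * z - 1/3 * y) * h3

lemma eq_paramZ_of_gradQ (h : gradQ ![x, y, z, 1] = 0) : z = paramZ x := by
  obtain ⟨h0, h1, h2, h3⟩ := (gradQ_affine_eq_zero_iff x y z).mp h
  rw [paramZ]
  linear_combination
    (-1463433052112493/6276216522368 * x ^ 46 * y * z + 133039368373863/3138108261184 * x ^ 44 * z ^ 4 + 3592062946094301/3138108261184 * x ^ 43 * y ^ 3 * z ^ 2 + 665196841869315/482785886336 * x ^ 44 * y ^ 2 + 385113961082235/482785886336 * x ^ 42 * y * z ^ 3 - 926607530603923/784527065296 * x ^ 43 * z - 8087393182726935/30174117896 * x ^ 39 * z ^ 3 + 597088562592919280625/30174117896 * x ^ 32 * z ^ 10 - 843782763161371473825/11227578752 * x ^ 29 * y ^ 2 * z ^ 11 + 1617478636545387/60348235792 * x ^ 37 * y * z ^ 2 + 60287840089418970/3771764737 * x ^ 35 * z ^ 5 + 700890967304269495593/4642171984 * x ^ 30 * y * z ^ 9 + 6355893036481504381341/16647789184 * x ^ 28 * z ^ 12 +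 147043512413217/9284343968 * x ^ 38 - 14851394753734917/5613789376 * x ^ 33 * y * z ^ 4 - 27895807223673024165775/241392943168 * x ^ 31 * z ^ 7 - 606628996366042549774035/482785886336 * x ^ 28 * y ^ 2 * z ^ 8 - 652039948544341917/120696471584 * x ^ 34 * z ^ 2 - 11632795995975270222722077/2413929431680 * x ^ 31 * y ^ 2 * z ^ 3 + 5851521784854989225943933/2413929431680 * x ^ 29 * y * z ^ 6 + 28553226535575663273954189/1206964715840 * x ^ 28 * y ^ 4 * z ^ 4 + 8026118289179835901/15690541305920 * x ^ 32 * y * z - 68742447492698015849590631/15690541305920 * x ^ 30 * z ^ 4 - 572651041878111987/7845270652960 * x ^ 29 * y ^ 3 * z ^ 2 - 21209297847337481/241392943168 * x ^ 30 * y ^ 2 - 68210456645029942104463959/1206964715840 * x ^ 28 * y * z ^ 3 + 268083468745499472099336953/15690541305920 * x ^ 29 * z - 51770422570543215/60348235792 * x ^ 25 * z ^ 3 + 2271203949532856625/35878856 * x ^ 18 * z ^ 10 - 4002344667413352608425/16647789184 * x ^ 15 * y ^ 2 * z ^ 11 + 10354084514108643/120696471584 * x ^ 23 * y * z ^ 2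 + 38525477550041091435/120696471584 * x ^ 21 * z ^ 5 + 863876699930272336801591/482785886336 * x ^ 16 * y * z ^ 9 + 13890018149434014326361/4272441472 * x ^ 14 * z ^ 12 - 294917914005267/3399900608 * x ^ 24 - 4256850198387528315/120696471584 * x ^ 19 * y * z ^ 4 - 36933119449273472890647/37137375872 * x ^ 17 * z ^ 7 - 5787179859290276668152393/482785886336 * x ^ 14 * y ^ 2 * z ^ 8 + 3994686791206298481/241392943168 * x ^ 20 * z ^ 2 - 53854680239422310595347077/1206964715840 * x ^ 17 * y ^ 2 * z ^ 3 + 53809734806288578906486201/2413929431680 * x ^ 15 * y * z ^ 6 + 132188760587672944188579189/603482357920 * x ^ 14 * y ^ 4 * z ^ 4 - 63970353347229871057/31381082611840 * x ^ 18 * y * z - 636450171005897618595124001/15690541305920 * x ^ 16 * z ^ 4 + 400829814078059979/15690541305920 * x ^ 15 * y ^ 3 * z ^ 2 + 14845548669557777/482785886336 * x ^ 16 * y ^ 2 - 48582208387898436287253063/92843439680 * x ^ 14 * y * z ^ 3 + 2482209661639637042085003623/15690541305920 * x ^ 15 * z - 24040750423108335/60348235792 * x ^ 11 * z ^ 3 +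 430332339518429651625/15087058948 * x ^ 4 * z ^ 10 - 13074779314892521916075/120696471584 * x * y ^ 2 * z ^ 11 + 4808150084621667/120696471584 * x ^ 9 * y * z ^ 2 + 18738380977388406705/120696471584 * x ^ 7 * z ^ 5 + 416156948391235055368365/482785886336 * x ^ 2 * y * z ^ 9 + 8709689363261017715007/5613789376 * z ^ 12 - 10479853729140873/241392943168 * x ^ 10 - 316314292903027503/18568687936 * x ^ 5 * y * z ^ 4 - 1606171732699189023285669/3379501204352 * x ^ 3 * z ^ 7 - 1212949123866042269516217/211218825272 * y ^ 2 * z ^ 8 + 1991499507792454989/241392943168 * x ^ 6 * z ^ 2 - 27759536834940997051602219/1299808155520 * x ^ 3 * y ^ 2 * z ^ 3 + 90131126375458137018064349/8448753010880 * x * y * z ^ 6 + 68137044958491538217569083/649904077760 * y ^ 4 * z ^ 4 - 27993262623166832237/27458447285360 * x ^ 4 * y * z - 2132387558331532129937841333/109833789141440 * x ^ 2 * z ^ 4 + 804266795392002711/54916894570720 * x * y ^ 3 * z ^ 2 + 29787659088592693/1689750602176 * x ^ 2 * y ^ 2 - 4232068858624977053266118849/16897506021760 * y * z ^ 3 + 111381691180182143925827923/1470988247430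 * x * z) * h0
    + (133039368373863/482785886336 * x ^ 45 * y ^ 2 * z + 665196841869315/482785886336 * x ^ 43 * y * z ^ 4 + 35010360098385/16647789184 * x ^ 44 * z ^ 2 - 133039368373863/482785886336 * x ^ 43 * y ^ 3 + 268412760754285/482785886336 * x ^ 42 * y * z + 48671402608774827/2321085992 * x ^ 36 * z ^ 6 - 39174077560750826332905/482785886336 * x ^ 29 * z ^ 13 + 168756552632274294765/11227578752 * x ^ 28 * y ^ 3 * z ^ 11 - 147043512413217/4642171984 * x ^ 39 * z - 60543254670480727929/30174117896 * x ^ 32 * z ^ 8 - 417283370821171467692331/482785886336 * x ^ 29 * y ^ 2 * z ^ 9 + 833246570341563/1040486824 * x ^ 35 * z ^ 3 - 859960870185125339433299/482785886336 * x ^ 30 * y * z ^ 7 - 33399332687855574030087/241392943168 * x ^ 28 * z ^ 10 + 927501461798435097/2159149760 * x ^ 31 * z ^ 5 + 1057526908725024565702007/185686879360 * x ^ 30 * y ^ 3 * z ^ 3 + 3066825630171222936912231/120696471584 * x ^ 28 * y ^ 2 * z ^ 6 + 441130537239651/46421719840 * x ^ 34 - 21209297847337481/1206964715840 * x ^ 31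 * y ^ 2 * z - 42301130195935184044950787/2413929431680 * x ^ 29 * y * z ^ 4 - 5155451417174164049325501/150870589480 * x ^ 30 * z ^ 2 + 21209297847337481/1206964715840 * x ^ 29 * y ^ 3 - 461994035860663439/2413929431680 * x ^ 28 * y * z + 8096402952182492073/120696471584 * x ^ 22 * z ^ 6 - 125317625559731883805485/482785886336 * x ^ 15 * z ^ 13 + 800468933482670521685/16647789184 * x ^ 14 * y ^ 3 * z ^ 11 + 294917914005267/1699950304 * x ^ 25 * z - 6740491284683531817855/241392943168 * x ^ 18 * z ^ 8 - 1802732062458417370434301/241392943168 * x ^ 15 * y ^ 2 * z ^ 9 + 7068096859092885/1040486824 * x ^ 21 * z ^ 3 - 7826568022387191799639029/482785886336 * x ^ 16 * y * z ^ 7 - 45908429777186460287013/18568687936 * x ^ 14 * z ^ 10 - 13961992471186403931/11605429960 * x ^ 17 * z ^ 5 + 4895880021765664599577007/92843439680 * x ^ 16 * y ^ 3 * z ^ 3 + 113585534029826862239338781/482785886336 * x ^ 14 * y ^ 2 * z ^ 6 - 884753742015801/16999503040 * x ^ 20 + 14845548669557777/2413929431680 * x ^ 17 * y ^ 2 * z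 - 195834999136453283797987037/1206964715840 * x ^ 15 * y * z ^ 4 - 95469596109721239685326159/301741178960 * x ^ 16 * z ^ 2 - 14845548669557777/2413929431680 * x ^ 15 * y ^ 3 - 1334918792222403823/1206964715840 * x ^ 14 * y * z + 3648904272701383647/120696471584 * x ^ 8 * z ^ 6 - 397654301867646559245/3399900608 * x * z ^ 13 + 2614955862978504383215/120696471584 * y ^ 3 * z ^ 11 + 10479853729140873/120696471584 * x ^ 11 * z - 3258626022323610925413/241392943168 * x ^ 4 * z ^ 8 - 1721439564527430918518043/482785886336 * x * y ^ 2 * z ^ 9 + 449617227276735/130060853 * x ^ 7 * z ^ 3 - 6553365754267177485981867/844875301088 * x ^ 2 * y * z ^ 7 - 72454069080603761156529/60348235792 * z ^ 10 - 732815740066310268711/1206964715840 * x ^ 3 * z ^ 5 + 32806725350384814697348077/1299808155520 * x ^ 2 * y ^ 3 * z ^ 3 + 380561824525501438358899181/3379501204352 * y ^ 2 * z ^ 6 - 31439561187422619/1206964715840 * x ^ 6 + 29787659088592693/8448753010880 * x ^ 3 * y ^ 2 * z - 656133809854112652936405561/8448753010880 * x * y * z ^ 4 - 2558922780952639951259785451/16897506021760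 * x ^ 2 * z ^ 2 - 29787659088592693/8448753010880 * x * y ^ 3 - 7061485668864089/12749627280 * y * z) * h1
    + (133039368373863/120696471584 * x ^ 45 * y * z ^ 2 - 133039368373863/482785886336 * x ^ 43 * z ^ 5 + 343101528964173/241392943168 * x ^ 46 + 259076664728049/241392943168 * x ^ 43 * y ^ 2 * z - 16338168045913/60348235792 * x ^ 42 * z ^ 2 + 317466943300135503/241392943168 * x ^ 38 * z ^ 4 - 1617478636545387/60348235792 * x ^ 37 * y ^ 3 * z ^ 2 + 1263838989191600115/120696471584 * x ^ 35 * y ^ 2 * z ^ 5 + 49030923996625142565/241392943168 * x ^ 33 * y * z ^ 8 - 746518885299627618969/7543529474 * x ^ 31 * z ^ 11 + 119417712518583856125/60348235792 * x ^ 30 * y ^ 3 * z ^ 9 - 1160765233098465525195/60348235792 * x ^ 28 * y ^ 2 * z ^ 12 - 147043512413217/9284343968 * x ^ 38 * y ^ 2 + 735217562066085/2080973648 * x ^ 36 * y * z ^ 3 - 25233990121719756153/241392943168 * x ^ 34 * z ^ 6 + 14851394753734917/5613789376 * x ^ 33 * y ^ 3 * z ^ 4 - 29618827661881887093/30174117896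 * x ^ 31 * y ^ 2 * z ^ 7 + 43103898910697261252721/60348235792 * x ^ 29 * y * z ^ 10 - 14073908054587864615881/37137375872 * x ^ 28 * y ^ 4 * z ^ 8 + 2597768719300167/120696471584 * x ^ 37 * z + 1813536653096343/4161947296 * x ^ 34 * y ^ 2 * z ^ 2 - 6737386695261189723/241392943168 * x ^ 32 * y * z ^ 5 + 70017516195562041932035/120696471584 * x ^ 30 * z ^ 8 - 324234727364012120155395/482785886336 * x ^ 29 * y ^ 3 * z ^ 6 - 441130537239651/9284343968 * x ^ 35 * y + 3153838268742815955/120696471584 * x ^ 33 * z ^ 3 - 59944738560454797/120696471584 * x ^ 32 * y ^ 3 * z + 11632898223271883114618383/482785886336 * x ^ 30 * y ^ 2 * z ^ 4 - 4653139285997650007121807/1206964715840 * x ^ 28 * y * z ^ 7 + 8382929593061970443/603482357920 * x ^ 31 * y * z ^ 2 + 26438796307166266387795417/1206964715840 * x ^ 29 * z ^ 5 + 6345165127452380363010261/2413929431680 * x ^ 28 * y ^ 3 * z ^ 3 + 262031550038768139/1206964715840 * x ^ 32 - 8248721586942514742052331/482785886336 * x ^ 29 * y ^ 2 * z - 61865415903961417808063647/1206964715840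 * x ^ 28 * z ^ 2 + 1015686577049011203/241392943168 * x ^ 24 * z ^ 4 - 10354084514108643/120696471584 * x ^ 23 * y ^ 3 * z ^ 2 + 311001879525707055/9284343968 * x ^ 21 * y ^ 2 * z ^ 5 + 156849626158404785445/241392943168 * x ^ 19 * y * z ^ 8 - 38209746834094830924573/120696471584 * x ^ 17 * z ^ 11 + 454240789906571325/71757712 * x ^ 16 * y ^ 3 * z ^ 9 - 345421452629603090545/5613789376 * x ^ 14 * y ^ 2 * z ^ 12 + 294917914005267/3399900608 * x ^ 24 * y ^ 2 + 468243831796455645/120696471584 * x ^ 22 * y * z ^ 3 - 13942394406532051971/8323894592 * x ^ 20 * z ^ 6 + 4256850198387528315/120696471584 * x ^ 19 * y ^ 3 * z ^ 4 - 837575957381884475517/60348235792 * x ^ 17 * y ^ 2 * z ^ 7 + 2738330914878064484359759/482785886336 * x ^ 15 * y * z ^ 10 - 1560035253874491814151529/482785886336 * x ^ 14 * y ^ 4 * z ^ 8 + 137351677509182283/241392943168 * x ^ 23 * z + 913548002014065789/241392943168 * x ^ 20 * y ^ 2 * z ^ 2 - 13515639088509894987/18568687936 * x ^ 18 * y * z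 ^ 5 + 83324218685921951555391/16647789184 * x ^ 16 * z ^ 8 - 1467063275374935033867561/241392943168 * x ^ 15 * y ^ 3 * z ^ 6 + 884753742015801/3399900608 * x ^ 21 * y - 1692642175998016509/18568687936 * x ^ 19 * z ^ 3 + 490823479322036427/241392943168 * x ^ 18 * y ^ 3 * z + 53854517709781534854900925/241392943168 * x ^ 16 * y ^ 2 * z ^ 4 - 85645487649317334721961993/2413929431680 * x ^ 14 * y * z ^ 7 - 49190461679782497761/1206964715840 * x ^ 17 * y * z ^ 2 + 489580579020145114528066373/2413929431680 * x ^ 15 * z ^ 5 + 58750719626334035700835827/2413929431680 * x ^ 14 * y ^ 3 * z ^ 3 - 60692631784402947/603482357920 * x ^ 18 - 29375261254555979742855353/185686879360 * x ^ 15 * y ^ 2 * z - 39504664751680904501812297/83238945920 * x ^ 14 * z ^ 2 + 230286306977054769/120696471584 * x ^ 10 * z ^ 4 - 4808150084621667/120696471584 * x ^ 9 * y ^ 3 * z ^ 2 + 911024030654190495/60348235792 * x ^ 7 * y ^ 2 * z ^ 5 + 35337611192128562625/120696471584 * x ^ 5 * y * z ^ 8 - 45668282453607128511/320149792 * x ^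 3 * z ^ 11 + 86066467903685930325/30174117896 * x ^ 2 * y ^ 3 * z ^ 9 - 6692673431711982894565/241392943168 * y ^ 2 * z ^ 12 + 10479853729140873/241392943168 * x ^ 10 * y ^ 2 + 225002289406950405/120696471584 * x ^ 8 * y * z ^ 3 - 1139465888761133787/1403447344 * x ^ 6 * z ^ 6 + 316314292903027503/18568687936 * x ^ 5 * y ^ 3 * z ^ 4 - 405047361504877517853/60348235792 * x ^ 3 * y ^ 2 * z ^ 7 + 1303616251334802549113685/482785886336 * x * y * z ^ 10 - 372257445943611843742575/241392943168 * y ^ 4 * z ^ 8 + 5309318201196975/18568687936 * x ^ 9 * z + 462245244794200161/241392943168 * x ^ 6 * y ^ 2 * z ^ 2 - 42614848403533100037/120696471584 * x ^ 4 * y * z ^ 5 + 8084174571867485665791435/3379501204352 * x ^ 2 * z ^ 8 - 9826122575063342397654717/3379501204352 * x * y ^ 3 * z ^ 6 + 31439561187422619/241392943168 * x ^ 7 * y - 255548155090824099/5613789376 * x ^ 5 * z ^ 3 + 245374475258665515/241392943168 * x ^ 4 * y ^ 3 * z + 360872835308242665754431153/3379501204352 * x ^ 2 * y ^ 2 * z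 ^ 4 - 286915866873332920802703179/16897506021760 * y * z ^ 7 - 171549687719385896273/8448753010880 * x ^ 3 * y * z ^ 2 + 9536689243227487285390707/98241314080 * x * z ^ 5 + 3785401865577434321602413/324952038880 * y ^ 3 * z ^ 3 - 29787659088592693/603482357920 * x ^ 4 - 639730715970955597755348151/8448753010880 * x * y ^ 2 * z - 885781063238237512010113889/3899424466560 * z ^ 2) * h2
    + (399118105121589/6276216522368 * x ^ 47 * z ^ 2 + 35521511355821421/6276216522368 * x ^ 44 * y ^ 2 * z ^ 3 - 3592062946094301/3138108261184 * x ^ 43 * y ^ 5 * z + 41893396893727491/6276216522368 * x ^ 45 * y * z - 4138224563629107/3138108261184 * x ^ 43 * z ^ 4 - 385113961082235/482785886336 * x ^ 42 * y ^ 3 * z ^ 2 - 49014504137739/9284343968 * x ^ 43 * y ^ 2 + 1388744283902605/60348235792 * x ^ 42 * z - 192028809872378251591875/482785886336 * x ^ 30 * y * z ^ 12 + 39174077560750826332905/482785886336 * x ^ 28 * z ^ 15 - 186920877919574455740657/120696471584 * x ^ 31 * z ^ 10 + 14073908054587864615881/37137375872 * x ^ 30 * y ^ 3 * z ^ 8 +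 717999652065471913150251/482785886336 * x ^ 28 * y ^ 2 * z ^ 11 + 324132791899756864357095/482785886336 * x ^ 31 * y ^ 2 * z ^ 6 - 3444811465730630913368409/482785886336 * x ^ 29 * y * z ^ 9 + 98698725134460598722561/60348235792 * x ^ 28 * y ^ 4 * z ^ 7 - 7402194597213597264420673/1206964715840 * x ^ 30 * z ^ 7 + 15862903630875368485530105/120696471584 * x ^ 29 * y ^ 3 * z ^ 5 - 28553226535575663273954189/1206964715840 * x ^ 28 * y ^ 6 * z ^ 3 - 63627893542012443/15690541305920 * x ^ 33 * z ^ 2 + 192473602082185006545849733/31381082611840 * x ^ 30 * y ^ 2 * z ^ 3 + 572651041878111987/7845270652960 * x ^ 29 * y ^ 5 * z - 251691690930556032716742609/2413929431680 * x ^ 28 * y * z ^ 6 + 536166936565629348512227177/31381082611840 * x ^ 31 * y * z - 142977850078400721091396955/3138108261184 * x ^ 29 * z ^ 4 - 580895930293612335180387/33999006080 * x ^ 28 * y ^ 3 * z ^ 2 + 98305971335089/3399900608 * x ^ 29 * y ^ 2 + 6211180152171701/60348235792 * x ^ 28 * z - 614298944475154103368875/482785886336 * x ^ 16 * y * z ^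 12 + 125317625559731883805485/482785886336 * x ^ 14 * z ^ 15 - 84664023309731340634929/5613789376 * x ^ 17 * z ^ 10 + 1560035253874491814151529/482785886336 * x ^ 16 * y ^ 3 * z ^ 8 + 6190669666199568982279127/482785886336 * x ^ 14 * y ^ 2 * z ^ 11 + 1465595325886050030961275/241392943168 * x ^ 17 * y ^ 2 * z ^ 6 - 15911058929894014903569959/241392943168 * x ^ 15 * y * z ^ 9 + 3673607556582384241151961/241392943168 * x ^ 14 * y ^ 4 * z ^ 7 - 68545486234129227999216051/1206964715840 * x ^ 16 * z ^ 7 + 73438200326484968993655105/60348235792 * x ^ 15 * y ^ 3 * z ^ 5 - 132188760587672944188579189/603482357920 * x ^ 14 * y ^ 6 * z ^ 3 + 44536646008673331/31381082611840 * x ^ 19 * z ^ 2 + 445521873493359988306995257/7845270652960 * x ^ 16 * y ^ 2 * z ^ 3 - 400829814078059979/15690541305920 * x ^ 15 * y ^ 5 * z - 2330437936582976026892056783/2413929431680 * x ^ 14 * y * z ^ 6 + 248220965612641143165780635/1569054130592 * x ^ 17 * y * z - 186457072825703311071398197/441987079040 * x ^ 15 * z ^ 4 - 381878428593050022495206457/2413929431680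 * x ^ 14 * y ^ 3 * z ^ 2 + 3493284576380291/241392943168 * x ^ 15 * y ^ 2 + 1565898976172419/30174117896 * x ^ 14 * z - 138398584908533088283875/241392943168 * x ^ 2 * y * z ^ 12 + 397654301867646559245/3399900608 * z ^ 15 - 1744674794168427841828815/241392943168 * x ^ 3 * z ^ 10 + 372257445943611843742575/241392943168 * x ^ 2 * y ^ 3 * z ^ 8 + 1477773525351676413562849/241392943168 * y ^ 2 * z ^ 11 + 9816153494586345782720085/3379501204352 * x ^ 3 * y ^ 2 * z ^ 6 - 106613168000384111252877279/3379501204352 * x * y * z ^ 9 + 12309395112533621062327761/1689750602176 * y ^ 4 * z ^ 7 - 1025259080194098672292197/37717647370 * x ^ 2 * z ^ 7 + 37853913865828632343093935/64990407776 * x * y ^ 3 * z ^ 5 - 68137044958491538217569083/649904077760 * y ^ 6 * z ^ 3 + 89362977265778079/109833789141440 * x ^ 5 * z ^ 2 + 2985389704398805037340143307/109833789141440 * x ^ 2 * y ^ 2 * z ^ 3 - 804266795392002711/54916894570720 * x * y ^ 5 * z - 150153794261617171922776447/324952038880 * y * z ^ 6 + 59403568484591472427177545/784527065296 * x ^ 3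 * y * z - 44354666823673893086437235011/219667578282880 * x * z ^ 4 - 1279461545147389512427595101/16897506021760 * y ^ 3 * z ^ 2 - 1/3 * z) * h3

end Affine

lemma gradQ_param_eq_zero {t : ℂ} (ht : eliminant.IsRoot t) :
    gradQ ![t, paramY t, paramZ t, 1] = 0 := by
  rw [Polynomial.IsRoot, eval_eliminant] at ht
  rw [gradQ_affine_eq_zero_iff, paramY, paramZ]
  refine ⟨?_, ?_, ?_, ?_⟩
  · linear_combination
      (481574352834893527519335279562791724438011009963579330779064474911049221875/26228462166207511842550831219080188158968805036928245170176 * t ^ 209 + 42260471318832695032564621378492498277190724493535800671657840972483628125/3609255836825032591516558582507250331494262424236720128 * t ^ 195 + 73235570342992401085245283900018657230799139486013552471407506214574477464753125/26228462166207511842550831219080188158968805036928245170176 * t ^ 181 + 592834532308170391882826145621557803704063409322092681114822041920192861564978125/2017574012785193218657756247621552935305292695148326551552 * t ^ 167 + 147666277768068628662001104449733978479514806607732917281526468759456597239827773375/13114231083103755921275415609540094079484402518464122585088 * t ^ 153 - 417650789401287469493402478106022379210514759198032250550587053969570074823876132125/13114231083103755921275415609540094079484402518464122585088 * t ^ 139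 + 220380720336512082181605253712405066418863480103775279801734100226703532667823370325/13114231083103755921275415609540094079484402518464122585088 * t ^ 125 + 227798877756907290557430532498261267870343208667299086490265094594062284783280740425/13114231083103755921275415609540094079484402518464122585088 * t ^ 111 - 22659212517684642871130195430315058184402859063147028424386886255524111518696744549/2017574012785193218657756247621552935305292695148326551552 * t ^ 97 - 152208659918065916038446313081721175955372361265526040314355388683954136261470819565/26228462166207511842550831219080188158968805036928245170176 * t ^ 83 + 47907906312395311095917683804517925953891125739427576475453361238395782338501791777/26228462166207511842550831219080188158968805036928245170176 * t ^ 69 + 30885023817252302152989080013100355091671188558169717701702888336891788837010439477/26228462166207511842550831219080188158968805036928245170176 * t ^ 55 + 987737950432982090476421631474285808393457466996184185291419605322493/6790914696487609503768751659651299255728996352 * t ^ 41 - 8468561533653771206292153030476507361514298730497/14066100291426911775646459770437632 * t ^ 27 + 1914480078414063365/482785886336 * t ^ 13) * ht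
  · linear_combination
      (-5773338038983582162158915789654543752162153256755098559307617539851/819639442693984745079713475596255879967775157404007661568 * t ^ 199 - 283210794418515994153027401025457430244367138704743170821554909074559/63049187899537288083054882738173529228290396723385204736 * t ^ 185 - 877982300267686656174184865374449686121091218301011956030606045709532869/819639442693984745079713475596255879967775157404007661568 * t ^ 171 - 7106966892713052119057769277672099712082739317099800178141135007715832925/63049187899537288083054882738173529228290396723385204736 * t ^ 157 - 1769634115620147269408661851904353327706854098055790440629461138922536814183/409819721346992372539856737798127939983887578702003830784 * t ^ 143 + 5111641602560316676047476344472858537865953684397189533087539983272432360665/409819721346992372539856737798127939983887578702003830784 * t ^ 129 + 2804076825186412209304735813068089177263977075344889895515065289345478536091/409819721346992372539856737798127939983887578702003830784 * t ^ 115 - 14043596472251636421462728620177588387721997255596008562128378058560594947489/409819721346992372539856737798127939983887578702003830784 * t ^ 101 + 590546640904875662435420042113914666644824094298145682019762936354723454509/63049187899537288083054882738173529228290396723385204736 * t ^ 87 + 13461956152913080468876719917412245253011780478605392267066326487413631622033/819639442693984745079713475596255879967775157404007661568 * t ^ 73 - 44709943709111275003917809628410709034355951369878803848738398575877605155/19061382388232203373946825013866415813204073428000178176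 * t ^ 59 - 2870696874536932523465833880171623032362403411591317457871049746491489703125/819639442693984745079713475596255879967775157404007661568 * t ^ 45 - 31408074738912773188563143017530659222321863530961583/56264401165707647102585839081750528 * t ^ 31 + 43690996 * t ^ 17 - t ^ 3) * ht
  · linear_combination
      (1108266647953833571988875556587542159752038967652779960820813688655775/1639278885387969490159426951192511759935550314808015323136 * t ^ 201 + 54365961714515901275075607538619520157165059223845872411360278856444175/126098375799074576166109765476347058456580793446770409472 * t ^ 187 + 168540014366564871670282114191992950905782360397738943936165568637056792985/1639278885387969490159426951192511759935550314808015323136 * t ^ 173 + 1364314539777178224471467591077377920268817099701088730262967608720980902545/126098375799074576166109765476347058456580793446770409472 * t ^ 159 + 339830626032234141750256625438574495858524041552904905703336803351871601888795/819639442693984745079713475596255879967775157404007661568 * t ^ 145 - 961148694681901576147196481089330465323404244867277787319457138169560014596705/819639442693984745079713475596255879967775157404007661568 * t ^ 131 + 507138584128831362113969473487875175443259832478056446399806914272832240190665/819639442693984745079713475596255879967775157404007661568 * t ^ 117 + 524277236268433838804472867234750179895994325608949535666551226760305396861245/819639442693984745079713475596255879967775157404007661568 * t ^ 103 - 52146056989256257579413434213024897702111513726909926107334658048470171596825/126098375799074576166109765476347058456580793446770409472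 * t ^ 89 - 350318124163674915729158955224542953597185194794076649895985125125429629980145/1639278885387969490159426951192511759935550314808015323136 * t ^ 75 + 110252240186561148879496920334644371360722954945461646804062843764646406836805/1639278885387969490159426951192511759935550314808015323136 * t ^ 61 + 71083203402573208322994915449747441140645713268071545667545040868668502912281/1639278885387969490159426951192511759935550314808015323136 * t ^ 47 + 602745683132710433335988267730365200851913071254635889/112528802331415294205171678163501056 * t ^ 33 - 991499093391962864139761485930499/58270553011309277876224 * t ^ 19 - t ^ 5) * ht
  · linear_combination
      (-952239409280783862964418138530432272659257650691241283375/27163658785950438015075006638605197022915985408 * t ^ 154 - 113860628213951571697960197915998997615354935398275396226125/6790914696487609503768751659651299255728996352 * t ^ 140 - 4518988007336309934710286995699510830715994042399239679084675/1697728674121902375942187914912824813932249088 * t ^ 126 - 940193417470650209035239734285575118084452051445158134011526725/6790914696487609503768751659651299255728996352 * t ^ 112 + 134689626193933377170073961635489294608886818808534352937759193/468338944585352379570258735148365465912344576 * t ^ 98 - 357845024053314925280170013140302938727641953016407556456477935/6790914696487609503768751659651299255728996352 * t ^ 84 - 502266444875575662877714813137473493719749968455347712644763577/3395457348243804751884375829825649627864498176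 * t ^ 70 + 116372438426428701309008130892696977157854995626327583383210529/6790914696487609503768751659651299255728996352 * t ^ 56 + 863364741083464605949038804288979456884990730787641515393524093/27163658785950438015075006638605197022915985408 * t ^ 42 + 73631355782290970695749331964293440884833267963903/14066100291426911775646459770437632 * t ^ 28 - 62581352073906798843/482785886336 * t ^ 14 + 3) * ht

lemma gradQ_affine_eq_zero_iff_isRoot (x y z : ℂ) :
    gradQ ![x, y, z, 1] = 0 ↔ eliminant.IsRoot x ∧ y = paramY x ∧ z = paramZ x := by
  refine ⟨fun h => ⟨isRoot_eliminant_of_gradQ h, eq_paramY_of_gradQ h, eq_paramZ_of_gradQ h⟩, ?_⟩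
  rintro ⟨hx, rfl, rfl⟩
  exact gradQ_param_eq_zero hx

lemma separable_eliminant : eliminant.Separable := by
  refine Polynomial.separable_of_mul_add_mul_derivative_eq_C (c := 26105207749066556488548352)
    (a := 1968255876257299161101240 * Polynomial.X ^ 42
        + 235347166844868059935745344 * Polynomial.X ^ 28
        - 105671822060197760395199416 * Polynomial.X ^ 14 - 26105207749066556488548352)
    (b := -35147426361737485019665 * Polynomial.X ^ 43 - 5603503972933323687493529 * Polynomial.X ^ 29
        + 3773993540731343839575813 * Polynomial.X ^ 15 + 1864657869120313523560357 * Polynomial.X)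
    (by norm_num) ?_
  simp only [eliminant, map_sub, map_add, Polynomial.derivative_mul, Polynomial.derivative_X_pow,
    Polynomial.derivative_ofNat, Polynomial.derivative_one, Nat.cast_ofNat, map_ofNat]
  ring

lemma natDegree_eliminant : eliminant.natDegree = 56 := by
  unfold eliminant; compute_degree!

lemma ncard_rootSet_eliminant : (eliminant.rootSet ℂ).ncard = 56 := by
  rw [← Nat.card_coe_set_eq, Nat.card_eq_fintype_card,
    Polynomial.card_rootSet_eq_natDegree separable_eliminant (IsAlgClosed.splits _),
    natDegree_eliminant]

lemma mem_rootSet_eliminant {t : ℂ} : t ∈ eliminant.rootSet ℂ ↔ eliminant.IsRoot t := by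
  rw [Polynomial.mem_rootSet_of_ne separable_eliminant.ne_zero, Polynomial.coe_aeval_eq_eval,
    Polynomial.IsRoot]

noncomputable def singularPoint (t : ℂ) : Projectivization ℂ (Fin 4 → ℂ) :=
  Projectivization.mk ℂ ![t, paramY t, paramZ t, 1] fun h => one_ne_zero (congrFun h 3)

lemma singularPoint_injective : Function.Injective singularPoint := by
  intro s t h
  obtain ⟨a, ha⟩ := (Projectivization.mk_eq_mk_iff' ℂ _ _ _ _).mp h
  have h3 := congrFun ha 3
  have h0 := congrFun ha 0
  simp only [Pi.smul_apply, Matrix.cons_val_zero, Matrix.cons_val, smul_eq_mul, mul_one] at h3 h0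
  simpa [h3] using h0.symm

lemma exists_singularPoint_eq_mk {v : Fin 4 → ℂ} (hv : v ≠ 0) (h : gradQ v = 0) :
    ∃ t ∈ eliminant.rootSet ℂ, singularPoint t = Projectivization.mk ℂ v hv := by
  have h3 : v 3 ≠ 0 := fun h3 => hv (eq_zero_of_gradQ_eq_zero_of_last_eq_zero h h3)
  have hv_eq : v 3 • ![v 0 / v 3, v 1 / v 3, v 2 / v 3, 1] = v := by
    ext i; fin_cases i <;> simp [mul_div_cancel₀ _ h3]
  have haffine : gradQ ![v 0 / v 3, v 1 / v 3, v 2 / v 3, 1] = 0 := by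
    have := gradQ_smul (v 3) ![v 0 / v 3, v 1 / v 3, v 2 / v 3, 1]
    rw [hv_eq, h, eq_comm, smul_eq_zero] at this
    exact this.resolve_left (pow_ne_zero 5 h3)
  obtain ⟨hroot, hy, hz⟩ := (gradQ_affine_eq_zero_iff_isRoot _ _ _).mp haffine
  refine ⟨v 0 / v 3, mem_rootSet_eliminant.mpr hroot, ?_⟩
  rw [singularPoint, Projectivization.mk_eq_mk_iff', ← hy, ← hz]
  exact ⟨(v 3)⁻¹, (inv_smul_eq_iff₀ h3).mpr hv_eq.symm⟩

lemma singular_locus_eq_image :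
    {x : Projectivization ℂ (Fin 4 → ℂ) |
        ∃ (v : Fin 4 → ℂ) (hv : v ≠ 0), x = Projectivization.mk ℂ v hv ∧
          eval v Q = 0 ∧ ∀ i : Fin 4, eval v (pderiv i Q) = 0} =
      singularPoint '' eliminant.rootSet ℂ := by
  ext x
  simp only [eval_Q_eq_zero_and_forall_eval_pderiv_iff, Set.mem_image]
  constructor
  · rintro ⟨v, hv, rfl, hgrad⟩
    exact exists_singularPoint_eq_mk hv hgrad
  · rintro ⟨t, ht, rfl⟩
    exact ⟨_, fun h => one_ne_zero (congrFun h 3), rfl,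
      gradQ_param_eq_zero (mem_rootSet_eliminant.mp ht)⟩

/-- The singular locus of the sextic surface `Q = 0` consists of exactly 56
points of `ℙ³(ℂ)`. -/
theorem card_singular_locus_eq_56 :
    {x : Projectivization ℂ (Fin 4 → ℂ) |
        ∃ (v : Fin 4 → ℂ) (hv : v ≠ 0), x = Projectivization.mk ℂ v hv ∧
          eval v Q = 0 ∧ ∀ i : Fin 4, eval v (pderiv i Q) = 0}.ncard = 56 := by
  rw [singular_locus_eq_image, Set.ncard_image_of_injective _ singularPoint_injective,
    ncard_rootSet_eliminant]
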